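/- arXiv:0712.1507 — 4 statements merged into one kernel-verified Lean document; each statement's English description precedes it below -/
import Mathlib

section
/- Under the lower length bound ℓ_e ≥ ℓ₀ > 0, the adjoint of the discrete exterior derivative d: 𝒢 → ℓ²(E) is given by (d*η)(v) = P_v({(1/ℓ_e)·(±η_e)}_{e∈E_v}), where the sign is + if v = ∂₊e and − if v = ∂₋e, and P_v is the orthogonal projection of ℂ^{E_v} onto 𝒢_v. -/
open Finset

local notation "conj'" => starRingEnd ℂ

/- Conjugating the orthogonality relation `⟨Jη − D, F⟩ = 0` edge by edge gives
`⟨dF, η⟩ − ⟨F, D⟩`, because `conj' (±η / ℓ) = ± conj' η / ℓ` for real `ℓ`. -/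
theorem conj_residual_pairing_eq (r : ℝ) (η d₁ d₂ f₁ f₂ : ℂ) :
    conj' ((-η / r - d₁) * conj' f₁ + (η / r - d₂) * conj' f₂) =
      (f₂ - f₁) * conj' η / r - (f₁ * conj' d₁ + f₂ * conj' d₂) := by
  simp only [map_add, map_mul, map_sub, map_div₀, map_neg, Complex.conj_ofReal,
    Complex.conj_conj]
  ring

/-- An element of `E → ℂ × ℂ` stands for a vertex function `F ∈ 𝒢_max`: `(F e).1` and `(F e).2`
are the values `F_e(∂₋e)` and `F_e(∂₊e)`. -/
theorem stmt3_general {E : Type*} [Fintype E] (ℓ : E → ℝ) (𝒢 : Submodule ℂ (E → ℂ × ℂ)) (η : E → ℂ)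
    (D : E → ℂ × ℂ)
    (hproj : ∀ G ∈ 𝒢, ∑ e : E,
        (((-(η e) / (ℓ e : ℂ)) - (D e).1) * conj' ((G e).1) +
          ((η e / (ℓ e : ℂ)) - (D e).2) * conj' ((G e).2)) = 0) :
    ∀ F ∈ 𝒢, ∑ e : E, ((F e).2 - (F e).1) * conj' (η e) / (ℓ e : ℂ) =
      ∑ e : E, ((F e).1 * conj' ((D e).1) + (F e).2 * conj' ((D e).2)) := by
  intro F hF
  have h := congrArg conj' (hproj F hF)
  rw [map_sum, map_zero] at h
  rw [← sub_eq_zero, ← sum_sub_distrib, ← h]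
  exact sum_congr rfl fun e _ => (conj_residual_pairing_eq _ _ _ _ _ _).symm

/-- Adjoint of the discrete exterior derivative: if `D ∈ 𝒢` is the orthogonal projection of
`Jη := {(1/ℓ_e)·(±η_e)}` onto `𝒢` (i.e. `Jη − D ⟂ 𝒢`), then `D` satisfies the defining
identity of the adjoint: `⟨dF, η⟩_{ℓ²(E)} = ⟨F, D⟩_𝒢` for all `F ∈ 𝒢`.  Here `𝒢^max` is
modelled as `E → ℂ × ℂ` (value at `∂₋e`, value at `∂₊e`), `(dF)_e = F_e(∂₊e) − F_e(∂₋e)`,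
`⟨η,η'⟩_{ℓ²(E)} = Σ_e η_e conj η'_e / ℓ_e` and `⟨F,G⟩_𝒢 = Σ_e (F₋ conj G₋ + F₊ conj G₊)`. -/
theorem stmt3 {E : Type*} [Fintype E] (ℓ : E → ℝ) (ℓ₀ : ℝ) (h₀ : 0 < ℓ₀)
    (hℓ : ∀ e, ℓ₀ ≤ ℓ e) (𝒢 : Submodule ℂ (E → ℂ × ℂ)) (η : E → ℂ) (D : E → ℂ × ℂ)
    (hD : D ∈ 𝒢)
    (hproj : ∀ G ∈ 𝒢, ∑ e : E,
        (((-(η e) / (ℓ e : ℂ)) - (D e).1) * conj' ((G e).1) +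
          ((η e / (ℓ e : ℂ)) - (D e).2) * conj' ((G e).2)) = 0) :
    ∀ F ∈ 𝒢, ∑ e : E, ((F e).2 - (F e).1) * conj' (η e) / (ℓ e : ℂ) =
      ∑ e : E, ((F e).1 * conj' ((D e).1) + (F e).2 * conj' ((D e).2)) :=
  stmt3_general ℓ 𝒢 η D hproj
end

section
/- Let λ ∈ (0, π²). Then λ is an eigenvalue of the metric graph Laplacian Δ_𝒢 on a finite equilateral metric graph with vertex space 𝒢 if and only if 1 − cos√λ is an eigenvalue of the discrete generalised Laplacian Δ̂_𝒢, with equal multiplicities; the map F ↦ β(λ)F (edgewise interpolation by fundamental solutions) is a linear isomorphism from ker(Δ̂_𝒢 − (1−cos√λ)) onto ker(Δ_𝒢 − λ). -/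
open Set

/-!
On an edge of length one, a solution of `-f'' = c² f` is determined by its endpoint values as
soon as `sin c ≠ 0` (true for `c = √λ`, `λ ∈ (0, π²)`), and `β(λ)` is exactly this interpolation;
so taking vertex values inverts `β(λ)` on solutions. The oriented derivatives of `β(λ)F` are
`(c / sin c) • (cos c • F - σF)`, hence the Kirchhoff-type condition on them is, up to the nonzero
factor `c / sin c`, the discrete eigenvalue equation `(F - σF) - (1 - cos c) • F ∈ 𝒢ᗮ`.
-/

lemma Set.BijOn.exists_mem_ne_iff {α β : Type*} {f : α → β} {s : Set α} {t : Set β}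
    (h : BijOn f s t) {a : α} (ha : a ∈ s) : (∃ x ∈ s, x ≠ a) ↔ ∃ y ∈ t, y ≠ f a := by
  constructor
  · rintro ⟨x, hx, hxa⟩
    exact ⟨f x, h.mapsTo hx, fun hfx => hxa (h.injOn hx ha hfx)⟩
  · rintro ⟨y, hy, hya⟩
    obtain ⟨x, hx, rfl⟩ := h.surjOn hy
    exact ⟨x, hx, fun hxa => hya (hxa ▸ rfl)⟩

noncomputable section

namespace MetricGraph

open Complex

section Edge

variable (c : ℂ)

lemma hasDerivAt_sin_mul_ofReal (x : ℝ) :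
    HasDerivAt (fun t : ℝ => sin (c * t)) (c * cos (c * x)) x := by
  simpa [mul_comm] using ((hasDerivAt_id (x : ℂ)).const_mul c).csin.comp_ofReal

lemma hasDerivAt_cos_mul_ofReal (x : ℝ) :
    HasDerivAt (fun t : ℝ => cos (c * t)) (-(c * sin (c * x))) x := by
  simpa [mul_comm] using ((hasDerivAt_id (x : ℂ)).const_mul c).ccos.comp_ofReal

def trigComb (a b : ℂ) : ℝ → ℂ := fun x => a * cos (c * x) + b * sin (c * x)

lemma hasDerivAt_trigComb (a b : ℂ) (x : ℝ) :
    HasDerivAt (trigComb c a b) (trigComb c (b * c) (-(a * c)) x) x := by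
  refine (((hasDerivAt_cos_mul_ofReal c x).const_mul a).add
    ((hasDerivAt_sin_mul_ofReal c x).const_mul b)).congr_deriv ?_
  simp only [trigComb]
  ring

lemma deriv_trigComb (a b : ℂ) : deriv (trigComb c a b) = trigComb c (b * c) (-(a * c)) :=
  funext fun x => (hasDerivAt_trigComb c a b x).deriv

lemma deriv_deriv_trigComb (a b : ℂ) (x : ℝ) :
    deriv (deriv (trigComb c a b)) x = -c ^ 2 * trigComb c a b x := by
  simp only [deriv_trigComb, trigComb]
  ring

lemma contDiff_trigComb (a b : ℂ) : ContDiff ℝ 2 (trigComb c a b) := by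
  have hlin : ContDiff ℝ 2 fun x : ℝ => c * (x : ℂ) :=
    contDiff_const.mul ofRealCLM.contDiff
  exact (contDiff_const.mul ((contDiff_cos.restrict_scalars ℝ).comp hlin)).add
    (contDiff_const.mul ((contDiff_sin.restrict_scalars ℝ).comp hlin))

def edgeInterp (a b : ℂ) : ℝ → ℂ := fun x =>
  a * sin (c * (1 - (x : ℂ))) / sin c + b * sin (c * (x : ℂ)) / sin c

variable {c}

/-- Uniqueness for `f'' = -c² f`: the quantities `H` and `K` below are first integrals, and
`f = (H cos(cx) + K sin(cx)) / c`. -/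
lemma eq_trigComb_of_deriv_deriv (hc : c ≠ 0) {f : ℝ → ℂ} (hf : ContDiff ℝ 2 f)
    (hode : ∀ x, deriv (deriv f) x = -c ^ 2 * f x) :
    f = trigComb c (f 0) (deriv f 0 / c) := by
  have hf' : Differentiable ℝ f := hf.differentiable (by norm_num)
  have hf'' : Differentiable ℝ (deriv f) :=
    ((contDiff_succ_iff_deriv (n := 1)).mp hf).2.2.differentiable (by norm_num)
  set H : ℝ → ℂ := fun x => c * f x * cos (c * x) - deriv f x * sin (c * x)
  set K : ℝ → ℂ := fun x => c * f x * sin (c * x) + deriv f x * cos (c * x)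
  have hH : ∀ x, HasDerivAt H 0 x := fun x =>
    ((((hf' x).hasDerivAt.const_mul c).mul (hasDerivAt_cos_mul_ofReal c x)).sub
      ((hf'' x).hasDerivAt.mul (hasDerivAt_sin_mul_ofReal c x))).congr_deriv
      (by rw [hode x]; ring)
  have hK : ∀ x, HasDerivAt K 0 x := fun x =>
    ((((hf' x).hasDerivAt.const_mul c).mul (hasDerivAt_sin_mul_ofReal c x)).add
      ((hf'' x).hasDerivAt.mul (hasDerivAt_cos_mul_ofReal c x))).congr_deriv
      (by rw [hode x]; ring)
  funext x
  have hHx : H x = H 0 :=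
    is_const_of_deriv_eq_zero (fun y => (hH y).differentiableAt) (fun y => (hH y).deriv) x 0
  have hKx : K x = K 0 :=
    is_const_of_deriv_eq_zero (fun y => (hK y).differentiableAt) (fun y => (hK y).deriv) x 0
  simp only [H, K, ofReal_zero, mul_zero, cos_zero, sin_zero, mul_one, sub_zero,
    zero_add] at hHx hKx
  simp only [trigComb]
  field_simp
  linear_combination cos (c * x) * hHx + sin (c * x) * hKx - c * f x * sin_sq_add_cos_sq (c * x)

lemma edgeInterp_eq_trigComb (hsin : sin c ≠ 0) (a b : ℂ) :
    edgeInterp c a b = trigComb c a ((b - a * cos c) / sin c) := by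
  funext x
  simp only [edgeInterp, trigComb, mul_sub, mul_one, sin_sub]
  field_simp
  ring

lemma edgeInterp_zero (hsin : sin c ≠ 0) (a b : ℂ) : edgeInterp c a b 0 = a := by
  simp [edgeInterp, hsin]

lemma edgeInterp_one (hsin : sin c ≠ 0) (a b : ℂ) : edgeInterp c a b 1 = b := by
  simp [edgeInterp, hsin]

lemma deriv_edgeInterp_zero (hsin : sin c ≠ 0) (a b : ℂ) :
    deriv (edgeInterp c a b) 0 = c / sin c * (b - cos c * a) := by
  rw [edgeInterp_eq_trigComb hsin, deriv_trigComb]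
  simp only [trigComb, ofReal_zero, mul_zero, cos_zero, sin_zero]
  field_simp
  ring

lemma deriv_edgeInterp_one (hsin : sin c ≠ 0) (a b : ℂ) :
    deriv (edgeInterp c a b) 1 = c / sin c * (cos c * b - a) := by
  rw [edgeInterp_eq_trigComb hsin, deriv_trigComb]
  simp only [trigComb, ofReal_one, mul_one]
  field_simp
  linear_combination -(c * a) * sin_sq_add_cos_sq c

lemma eq_edgeInterp_of_deriv_deriv (hc : c ≠ 0) (hsin : sin c ≠ 0) {f : ℝ → ℂ}
    (hf : ContDiff ℝ 2 f) (hode : ∀ x, deriv (deriv f) x = -c ^ 2 * f x) :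
    f = edgeInterp c (f 0) (f 1) := by
  have hsol := eq_trigComb_of_deriv_deriv hc hf hode
  have hf1 : f 1 = f 0 * cos c + deriv f 0 / c * sin c := by
    conv_lhs => rw [hsol]
    simp [trigComb]
  rw [edgeInterp_eq_trigComb hsin, hf1]
  convert hsol using 2
  field_simp
  ring

end Edge

section Graph

variable {E : Type*}

def boundaryValues (f : E → ℝ → ℂ) : EuclideanSpace ℂ (E × Bool) :=
  WithLp.toLp 2 fun p => if p.2 then f p.1 1 else f p.1 0

def orientedDerivs (f : E → ℝ → ℂ) : EuclideanSpace ℂ (E × Bool) :=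
  WithLp.toLp 2 fun p => if p.2 then deriv (f p.1) 1 else -deriv (f p.1) 0

def swapEnds (F : EuclideanSpace ℂ (E × Bool)) : EuclideanSpace ℂ (E × Bool) :=
  WithLp.toLp 2 fun p => F (p.1, !p.2)

def interpolate (c : ℂ) (F : EuclideanSpace ℂ (E × Bool)) : E → ℝ → ℂ :=
  fun e => edgeInterp c (F (e, false)) (F (e, true))

variable {c : ℂ}

lemma boundaryValues_interpolate (hsin : sin c ≠ 0) (F : EuclideanSpace ℂ (E × Bool)) :
    boundaryValues (interpolate c F) = F := by
  ext ⟨e, _ | _⟩ <;> simp [boundaryValues, interpolate, edgeInterp_zero hsin, edgeInterp_one hsin]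

lemma orientedDerivs_interpolate (hsin : sin c ≠ 0) (F : EuclideanSpace ℂ (E × Bool)) :
    orientedDerivs (interpolate c F) = (c / sin c) • ((F - swapEnds F) - (1 - cos c) • F) := by
  ext ⟨e, _ | _⟩ <;>
    simp only [orientedDerivs, interpolate, swapEnds, PiLp.toLp_apply, PiLp.smul_apply,
      PiLp.sub_apply, smul_eq_mul, deriv_edgeInterp_zero hsin, deriv_edgeInterp_one hsin,
      Bool.false_eq_true, if_false, if_true, Bool.not_false, Bool.not_true] <;>
    ring

lemma interpolate_zero : interpolate c (0 : EuclideanSpace ℂ (E × Bool)) = 0 := by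
  funext e x
  simp [interpolate, edgeInterp]

lemma swapEnds_zero : swapEnds (0 : EuclideanSpace ℂ (E × Bool)) = 0 := by
  ext
  simp [swapEnds]

variable [Fintype E] {𝒢 : Submodule ℂ (EuclideanSpace ℂ (E × Bool))}

variable (𝒢) in
def discreteEigenset (z : ℂ) : Set (EuclideanSpace ℂ (E × Bool)) :=
  {F | F ∈ 𝒢 ∧ (F - swapEnds F) - z • F ∈ 𝒢ᗮ}

variable (𝒢) in
def metricEigenset (lam : ℂ) : Set (E → ℝ → ℂ) :=
  {f | (∀ e, ContDiff ℝ 2 (f e)) ∧ (∀ e x, deriv (deriv (f e)) x = -lam * f e x) ∧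
    boundaryValues f ∈ 𝒢 ∧ orientedDerivs f ∈ 𝒢ᗮ}

lemma zero_mem_discreteEigenset (z : ℂ) :
    (0 : EuclideanSpace ℂ (E × Bool)) ∈ discreteEigenset 𝒢 z := by
  simp [discreteEigenset, swapEnds_zero]

lemma interpolate_mem_metricEigenset (hsin : sin c ≠ 0) {F : EuclideanSpace ℂ (E × Bool)}
    (hF : F ∈ discreteEigenset 𝒢 (1 - cos c)) : interpolate c F ∈ metricEigenset 𝒢 (c ^ 2) := by
  refine ⟨fun e => ?_, fun e x => ?_, ?_, ?_⟩
  · simp only [interpolate, edgeInterp_eq_trigComb hsin]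
    exact contDiff_trigComb c _ _
  · simp only [interpolate, edgeInterp_eq_trigComb hsin]
    exact deriv_deriv_trigComb c _ _ x
  · exact (boundaryValues_interpolate hsin F).symm ▸ hF.1
  · exact (orientedDerivs_interpolate hsin F).symm ▸ Submodule.smul_mem _ _ hF.2

lemma interpolate_boundaryValues (hc : c ≠ 0) (hsin : sin c ≠ 0) {f : E → ℝ → ℂ}
    (hf : f ∈ metricEigenset 𝒢 (c ^ 2)) : interpolate c (boundaryValues f) = f :=
  funext fun e => (eq_edgeInterp_of_deriv_deriv hc hsin (hf.1 e) (hf.2.1 e)).symm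

lemma boundaryValues_mem_discreteEigenset (hc : c ≠ 0) (hsin : sin c ≠ 0) {f : E → ℝ → ℂ}
    (hf : f ∈ metricEigenset 𝒢 (c ^ 2)) : boundaryValues f ∈ discreteEigenset 𝒢 (1 - cos c) := by
  set F := boundaryValues f
  have hderiv : orientedDerivs f = (c / sin c) • ((F - swapEnds F) - (1 - cos c) • F) := by
    rw [← orientedDerivs_interpolate hsin, interpolate_boundaryValues hc hsin hf]
  have hsmul : (sin c / c) • orientedDerivs f = (F - swapEnds F) - (1 - cos c) • F := by
    have hunit : sin c / c * (c / sin c) = 1 := by field_simp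
    rw [hderiv, smul_smul, hunit, one_smul]
  exact ⟨hf.2.2.1, hsmul ▸ Submodule.smul_mem _ _ hf.2.2.2⟩

theorem bijOn_interpolate (hc : c ≠ 0) (hsin : sin c ≠ 0) :
    BijOn (interpolate c) (discreteEigenset 𝒢 (1 - cos c)) (metricEigenset 𝒢 (c ^ 2)) :=
  InvOn.bijOn ⟨fun F _ => boundaryValues_interpolate hsin F,
      fun _ hf => interpolate_boundaryValues hc hsin hf⟩
    (fun _ hF => interpolate_mem_metricEigenset hsin hF)
    (fun _ hf => boundaryValues_mem_discreteEigenset hc hsin hf)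

end Graph

end MetricGraph

end

open MetricGraph

/-- Spectral relation at `λ ∈ (0,π²)` on a finite equilateral metric graph (`ℓ_e = 1`):
`λ` is an eigenvalue of the metric Laplacian `Δ_𝒢` iff `1 − cos √λ` is an eigenvalue of the
discrete generalised Laplacian `Δ̂_𝒢`, and interpolation by fundamental solutions
`B = β(λ)` is a (linear) bijection from the discrete eigenspace onto the metric eigenspace.
The discrete eigenspace is `{F ∈ 𝒢 : (F − σF) − (1 − cos √λ)F ⟂ 𝒢}` (i.e.
`P(F − σF) = (1 − cos√λ)F`), and the metric eigenspace consists of the edgewise `C²`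
solutions of `−f″ = λf` whose boundary values lie in `𝒢` and whose oriented derivative
values lie in `𝒢ᗮ`. -/
theorem stmt11 {E : Type*} [Fintype E]
    (𝒢 : Submodule ℂ (EuclideanSpace ℂ (E × Bool)))
    (lam : ℝ) (h1 : 0 < lam) (h2 : lam < Real.pi ^ 2)
    (s : ℂ) (hs : s = (Real.sqrt lam : ℂ))
    (bval obval : (E → ℝ → ℂ) → EuclideanSpace ℂ (E × Bool))
    (hbval : ∀ f p, bval f p = if p.2 then f p.1 1 else f p.1 0)
    (hobval : ∀ f p, obval f p = if p.2 then deriv (f p.1) 1 else -deriv (f p.1) 0)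
    (σ : EuclideanSpace ℂ (E × Bool) → EuclideanSpace ℂ (E × Bool))
    (hσ : ∀ F p, σ F p = F (p.1, !p.2))
    (B : EuclideanSpace ℂ (E × Bool) → (E → ℝ → ℂ))
    (hB : ∀ F e x, B F e x =
      F (e, false) * Complex.sin (s * (1 - (x : ℂ))) / Complex.sin s +
        F (e, true) * Complex.sin (s * (x : ℂ)) / Complex.sin s)
    (Disc : Set (EuclideanSpace ℂ (E × Bool)))
    (hDisc : Disc = {F | F ∈ 𝒢 ∧ (F - σ F) - (1 - Complex.cos s) • F ∈ 𝒢ᗮ})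
    (Met : Set (E → ℝ → ℂ))
    (hMet : Met = {f | (∀ e, ContDiff ℝ 2 (f e)) ∧
        (∀ e x, deriv (deriv (f e)) x = -(lam : ℂ) * f e x) ∧
        bval f ∈ 𝒢 ∧ obval f ∈ 𝒢ᗮ}) :
    Set.BijOn B Disc Met ∧ ((∃ F ∈ Disc, F ≠ 0) ↔ ∃ f ∈ Met, f ≠ 0) := by
  have hsqrt_pos : 0 < Real.sqrt lam := Real.sqrt_pos.mpr h1
  have hsqrt_lt : Real.sqrt lam < Real.pi := (Real.sqrt_lt' Real.pi_pos).mpr h2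
  have hc : s ≠ 0 := hs ▸ Complex.ofReal_ne_zero.mpr hsqrt_pos.ne'
  have hsin : Complex.sin s ≠ 0 := by
    rw [hs, ← Complex.ofReal_sin, Complex.ofReal_ne_zero]
    exact (Real.sin_pos_of_pos_of_lt_pi hsqrt_pos hsqrt_lt).ne'
  have hlam : (lam : ℂ) = s ^ 2 := by
    rw [hs, ← Complex.ofReal_pow, Real.sq_sqrt h1.le]
  obtain rfl : bval = boundaryValues := funext fun f => by ext p; exact hbval f p
  obtain rfl : obval = orientedDerivs := funext fun f => by ext p; exact hobval f p
  obtain rfl : σ = swapEnds := funext fun F => by ext p; exact hσ F p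
  obtain rfl : B = interpolate s := funext fun F => funext fun e => funext fun x => hB F e x
  subst hDisc hMet
  have hbij : BijOn (interpolate s) (discreteEigenset 𝒢 (1 - Complex.cos s))
      (metricEigenset 𝒢 lam) := hlam ▸ bijOn_interpolate hc hsin
  have hne := hbij.exists_mem_ne_iff (zero_mem_discreteEigenset _)
  rw [interpolate_zero] at hne
  exact ⟨hbij, hne⟩
end

section
/- Let G be a finite simple graph (no loops, no double edges) with all edge lengths 1 and vertex space 𝒢 with generalised discrete Laplacian Δ̂_𝒢 = Id − M_𝒢, where M_𝒢 is the principle part. Then for every t > 0, tr e^{−tΔ̂_𝒢} = e^{−t} Σ_{n=0}^∞ (tⁿ/n!) Σ_{c ∈ C_n} W_𝒢(c), where C_n is the set of properly closed combinatorial paths of length n and W_𝒢(c) = tr( A_𝒢(v₀,v₁) A_𝒢(v₁,v₂) ⋯ A_𝒢(v_{n−1},v₀) ). -/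
open Finset

local notation "conj'" => starRingEnd ℂ

/-- The oriented edges (flags) of a simple graph: `𝒢^max = Flag G → ℂ`, the coordinate at
`(v,w)` being the component at the vertex `v` of the edge `vw`. -/
abbrev GFlag {V : Type*} (G : SimpleGraph V) := {p : V × V // G.Adj p.1 p.2}

/-- The generalised adjacency transfer `A^max(v,w)` (extended by zero to all of `𝒢^max`):
it sends `F` to the vector supported at the flag `(v,w)` with value `F(w,v)`. -/
noncomputable def transferMap {V : Type*} [DecidableEq V] (G : SimpleGraph V)
    {v w : V} (h : G.Adj v w) : Module.End ℂ (GFlag G → ℂ) :=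
  (LinearMap.proj (⟨(w, v), h.symm⟩ : GFlag G)).smulRight
    (Pi.single (⟨(v, w), h⟩ : GFlag G) 1)

/-- `A_𝒢(v,w) = P_v A^max(v,w) P_w`. -/
noncomputable def Amap {V : Type*} [DecidableEq V] (G : SimpleGraph V)
    (P : V → Module.End ℂ (GFlag G → ℂ)) {v w : V} (h : G.Adj v w) :
    Module.End ℂ (GFlag G → ℂ) :=
  P v ∘ₗ transferMap G h ∘ₗ P w

/-- Properly closed combinatorial paths of length `n ≥ 1`: `(v₀,…,v_{n−1},v₀)` with
consecutive vertices adjacent (cyclically). -/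
abbrev ClosedPath {V : Type*} (G : SimpleGraph V) (n : ℕ) :=
  {c : Fin n → V // ∀ i : Fin n, G.Adj (c i) (c (finRotate n i))}

/-- The weight `W_𝒢(c) = tr(A_𝒢(v₀,v₁)⋯A_𝒢(v_{n−1},v₀))` of a properly closed path. -/
noncomputable def pathWeight {V : Type*} [DecidableEq V] (G : SimpleGraph V)
    (P : V → Module.End ℂ (GFlag G → ℂ)) {n : ℕ} (c : ClosedPath G n) : ℂ :=
  LinearMap.trace ℂ (GFlag G → ℂ) ((List.ofFn fun i : Fin n => Amap G P (c.2 i)).prod)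

/-!
Write `M = Σ_{v,w} P_v T_{vw} P_w` with `T_{vw}` the adjacency transfer (zero off the edges).
Since the `P_v` are orthogonal idempotents, `M = Σ_u P_u M` and `P_u M P_{u'} = A_𝒢(u,u')`.
Expanding `Mⁿ = Σ_{c : Fin n → V} ∏ᵢ P_{cᵢ} M` and inserting, by idempotence and cyclicity of
the trace, a projection `P_{c(i+1)}` after every factor, `tr Mⁿ` becomes the sum over cyclic
vertex sequences of `tr ∏ᵢ A_𝒢(cᵢ, c(i+1))`; the sequences that are not closed paths contribute
`0`. As `M` maps into `𝒢`, these are also the traces of the powers of `M|_𝒢`. Finally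
`e^{-t(1-M)} = e^{-t} e^{tM}` as matrices, and the trace of the exponential series is the
series of traces.
-/

theorem sum_pow_eq_sum_prod_ofFn {R ι : Type*} [Semiring R] [Fintype ι] (f : ι → R) (n : ℕ) :
    (∑ i, f i) ^ n = ∑ c : Fin n → ι, (List.ofFn fun k => f (c k)).prod := by
  induction n with
  | zero => simp
  | succ n ih =>
    rw [pow_succ', ih, Finset.sum_mul_sum, ← Fintype.sum_prod_type',
      ← (Fin.consEquiv fun _ => ι).sum_comp]
    simp [List.ofFn_succ]

theorem finRotate_castSucc {n : ℕ} (i : Fin n) : finRotate (n + 1) i.castSucc = i.succ := by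
  simp

theorem prod_ofFn_idem_mul_mul_idem {R V : Type*} [Monoid R] {P : V → R}
    (hP : ∀ v, IsIdempotentElem (P v)) (M : R) {n : ℕ} (c : Fin (n + 1) → V) :
    (List.ofFn fun i : Fin n => P (c i.castSucc) * M).prod * P (c (Fin.last n)) =
      (List.ofFn fun i : Fin n => P (c i.castSucc) * M * P (c i.succ)).prod *
        P (c (Fin.last n)) := by
  have hP' : ∀ v x, P v * (P v * x) = P v * x := fun v x => by rw [← mul_assoc, (hP v).eq]
  induction n with
  | zero => simp
  | succ n ih =>
    have ih' := ih (Fin.init c)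
    simp only [Fin.init] at ih'
    simp only [List.ofFn_succ', List.concat_eq_append, List.prod_append, List.prod_singleton,
      Fin.succ_last]
    calc _ = (List.ofFn fun i : Fin n => P (c i.castSucc.castSucc) * M).prod *
            P (c (Fin.last n).castSucc) *
              (P (c (Fin.last n).castSucc) * M * P (c (Fin.last (n + 1)))) := by
          simp only [mul_assoc, hP']
      _ = _ := by
          rw [ih']
          simp only [mul_assoc, hP', (hP _).eq, Fin.succ_castSucc, Nat.succ_eq_add_one]

theorem LinearMap.trace_prod_ofFn_idem_mul {K E V : Type*} [CommRing K] [AddCommGroup E]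
    [Module K E] [Module.Free K E] [Module.Finite K E] {P : V → Module.End K E}
    (hP : ∀ v, IsIdempotentElem (P v)) (M : Module.End K E) {n : ℕ} (c : Fin n → V) :
    LinearMap.trace K E (List.ofFn fun i => P (c i) * M).prod =
      LinearMap.trace K E (List.ofFn fun i => P (c i) * M * P (c (finRotate n i))).prod := by
  cases n with
  | zero => rfl
  | succ n =>
    set X := (List.ofFn fun i => P (c i) * M).prod
    have hX : P (c 0) * X = X := by
      simp only [X, List.ofFn_succ, List.prod_cons, ← mul_assoc, (hP _).eq]
    calc LinearMap.trace K E X = LinearMap.trace K E (P (c 0) * X) := by rw [hX]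
      _ = LinearMap.trace K E (X * P (c 0)) := LinearMap.trace_mul_comm K _ _
      _ = _ := by
        have key := congrArg (· * (M * P (c 0))) (prod_ofFn_idem_mul_mul_idem hP M c)
        simp only [X, List.ofFn_succ', List.concat_eq_append, List.prod_append,
          List.prod_singleton, finRotate_castSucc, finRotate_last]
        simp only [mul_assoc] at key ⊢
        rw [key]

section Corners

variable {R V : Type*} [Semiring R] [Fintype V] [DecidableEq V] {P : V → R}

theorem OrthogonalIdempotents.mul_sum_corner_mul (he : OrthogonalIdempotents P)
    (T : V → V → R) (u u' : V) :
    P u * (∑ v, ∑ w, P v * T v w * P w) * P u' = P u * T u u' * P u' := by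
  have hassoc : ∀ v w, P u * (P v * T v w * P w) * P u' = P u * P v * T v w * (P w * P u') :=
    fun v w => by simp only [mul_assoc]
  simp [Finset.mul_sum, Finset.sum_mul, hassoc, he.mul_eq]

theorem OrthogonalIdempotents.sum_mul_sum_corner (he : OrthogonalIdempotents P)
    (T : V → V → R) :
    (∑ u, P u) * (∑ v, ∑ w, P v * T v w * P w) = ∑ v, ∑ w, P v * T v w * P w := by
  simp [Finset.mul_sum, Finset.sum_mul, ← mul_assoc, he.mul_eq]

end Corners

theorem LinearMap.trace_pow_sum_corner {K E V : Type*} [CommRing K] [AddCommGroup E]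
    [Module K E] [Module.Free K E] [Module.Finite K E] [Fintype V] [DecidableEq V]
    {P : V → Module.End K E} (he : OrthogonalIdempotents P) (T : V → V → Module.End K E)
    (n : ℕ) :
    LinearMap.trace K E ((∑ v, ∑ w, P v * T v w * P w) ^ n) =
      ∑ c : Fin n → V, LinearMap.trace K E (List.ofFn fun i =>
        P (c i) * T (c i) (c (finRotate n i)) * P (c (finRotate n i))).prod := by
  set M := ∑ v, ∑ w, P v * T v w * P w
  have hM : M = ∑ u, P u * M := by rw [← Finset.sum_mul, he.sum_mul_sum_corner]
  conv_lhs => rw [hM]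
  rw [sum_pow_eq_sum_prod_ofFn, map_sum]
  refine Finset.sum_congr rfl fun c _ => ?_
  rw [LinearMap.trace_prod_ofFn_idem_mul he.idem M c]
  simp only [M, he.mul_sum_corner_mul]

open NormedSpace in
theorem Matrix.hasSum_trace_exp_smul {ι : Type*} [Fintype ι] [DecidableEq ι]
    (A : Matrix ι ι ℂ) (z : ℂ) :
    HasSum (fun n : ℕ => z ^ n / n.factorial * (A ^ n).trace) (exp (z • A)).trace := by
  open scoped Matrix.Norms.Operator in
  have hexp := (exp_series_hasSum_exp' (𝕂 := ℂ) (z • A)).map (Matrix.traceAddMonoidHom ι ℂ)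
    continuous_id.matrix_trace
  refine hexp.congr_fun fun n => ?_
  simp only [Function.comp_apply, smul_pow, smul_smul, Matrix.traceAddMonoidHom_apply,
    Matrix.trace_smul, smul_eq_mul]
  ring

open NormedSpace in
theorem Matrix.exp_neg_smul_one_sub {ι : Type*} [Fintype ι] [DecidableEq ι]
    (A : Matrix ι ι ℂ) (z : ℂ) :
    exp ((-z) • (1 - A)) = Complex.exp (-z) • exp (z • A) := by
  have hcomm : Commute ((-z) • (1 : Matrix ι ι ℂ)) (z • A) :=
    (Commute.one_left _).smul_left _
  have hscalar : exp ((-z) • (1 : Matrix ι ι ℂ)) = Complex.exp (-z) • 1 := by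
    rw [Matrix.smul_one_eq_diagonal, Matrix.exp_diagonal, Pi.exp_def,
      ← Matrix.smul_one_eq_diagonal, Complex.exp_eq_exp_ℂ]
  rw [smul_sub, neg_smul z A, sub_neg_eq_add, Matrix.exp_add_of_commute _ _ hcomm, hscalar,
    smul_mul_assoc, one_mul]

open NormedSpace in
theorem LinearMap.hasSum_trace_exp_smul_toMatrix {E ι : Type*} [AddCommGroup E] [Module ℂ E]
    [Fintype ι] [DecidableEq ι] (b : Module.Basis ι ℂ E) (f : Module.End ℂ E) (z : ℂ) :
    HasSum (fun n : ℕ => z ^ n / n.factorial * LinearMap.trace ℂ E (f ^ n))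
      (exp (z • LinearMap.toMatrix b b f)).trace := by
  simpa only [LinearMap.trace_eq_matrix_trace ℂ b, ← LinearMap.toMatrix_pow] using
    (LinearMap.toMatrix b b f).hasSum_trace_exp_smul z

theorem LinearMap.tsum_trace_one_sub_pow {E : Type*} [AddCommGroup E] [Module ℂ E]
    [FiniteDimensional ℂ E] (f : Module.End ℂ E) (z : ℂ) :
    ∑' n : ℕ, (-z) ^ n / n.factorial * LinearMap.trace ℂ E ((1 - f) ^ n) =
      Complex.exp (-z) * ∑' n : ℕ, z ^ n / n.factorial * LinearMap.trace ℂ E (f ^ n) := by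
  let b := Module.finBasis ℂ E
  rw [(LinearMap.hasSum_trace_exp_smul_toMatrix b (1 - f) (-z)).tsum_eq,
    (LinearMap.hasSum_trace_exp_smul_toMatrix b f z).tsum_eq, map_sub, LinearMap.toMatrix_one,
    Matrix.exp_neg_smul_one_sub, Matrix.trace_smul, smul_eq_mul]

theorem orthogonalIdempotents_of_support {K ι V : Type*} [Semiring K] (π : ι → V)
    {P : V → Module.End K (ι → K)} (hidem : ∀ v, P v ∘ₗ P v = P v)
    (hloc : ∀ v (F : ι → K) (p : ι), π p ≠ v → P v F p = 0)
    (hloc' : ∀ v (F : ι → K), (∀ p, π p = v → F p = 0) → P v F = 0) :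
    OrthogonalIdempotents P where
  idem := hidem
  ortho v w hvw := LinearMap.ext fun F => hloc' v _ fun p hp => hloc w F p (hp ▸ hvw)

section Graph

variable {V : Type*} [DecidableEq V] (G : SimpleGraph V) [DecidableRel G.Adj]

noncomputable def adjTransfer (v w : V) : Module.End ℂ (GFlag G → ℂ) :=
  if h : G.Adj v w then transferMap G h else 0

theorem dite_Amap_eq_mul_adjTransfer_mul (P : V → Module.End ℂ (GFlag G → ℂ)) (v w : V) :
    (if h : G.Adj v w then Amap G P h else 0) = P v * adjTransfer G v w * P w := by
  unfold adjTransfer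
  split_ifs <;> simp [Amap, Module.End.mul_eq_comp, LinearMap.comp_assoc]

theorem sum_pathWeight_eq_sum_trace [Fintype V] (P : V → Module.End ℂ (GFlag G → ℂ)) (n : ℕ) :
    ∑ c : ClosedPath G n, pathWeight G P c =
      ∑ c : Fin n → V, LinearMap.trace ℂ (GFlag G → ℂ) (List.ofFn fun i =>
        P (c i) * adjTransfer G (c i) (c (finRotate n i)) * P (c (finRotate n i))).prod := by
  symm
  rw [← Finset.sum_filter_of_ne (p := fun c => ∀ i, G.Adj (c i) (c (finRotate n i)))
    fun c _ hc i => ?closed]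
  · refine (Finset.sum_subtype _ (by simp) _).trans (Fintype.sum_congr _ _ fun c => ?_)
    simp only [pathWeight, adjTransfer, dif_pos (c.2 _)]
    rfl
  case closed =>
    by_contra hi
    have hzero : P (c i) * adjTransfer G (c i) (c (finRotate n i)) * P (c (finRotate n i)) = 0 := by
      simp only [adjTransfer, dif_neg hi, mul_zero, zero_mul]
    exact hc (by rw [List.prod_eq_zero (List.mem_ofFn.2 ⟨i, hzero⟩), map_zero])

end Graph

theorem stmt15_general {V : Type*} [Fintype V] [DecidableEq V] (G : SimpleGraph V)
    [DecidableRel G.Adj]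
    (P : V → Module.End ℂ (GFlag G → ℂ))
    (hidem : ∀ v, P v ∘ₗ P v = P v)
    (hloc : ∀ v (F : GFlag G → ℂ) (p : GFlag G), p.1.1 ≠ v → P v F p = 0)
    (hloc' : ∀ v (F : GFlag G → ℂ), (∀ p : GFlag G, p.1.1 = v → F p = 0) → P v F = 0)
    (M : Module.End ℂ (GFlag G → ℂ))
    (hM : M = ∑ v : V, ∑ w : V,
      if h : G.Adj v w then Amap G P h else 0)
    (𝒢 : Submodule ℂ (GFlag G → ℂ)) (h𝒢 : 𝒢 = LinearMap.range (∑ v : V, P v))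
    (hMG : ∀ x ∈ 𝒢, M x ∈ 𝒢)
    (t : ℝ) :
    ∑' n : ℕ, (-(t : ℂ)) ^ n / (n.factorial : ℂ) *
        LinearMap.trace ℂ 𝒢 ((1 - M.restrict hMG) ^ n)
      = Complex.exp (-(t : ℂ)) * ((Module.finrank ℂ 𝒢 : ℂ) +
          ∑' n : ℕ, (t : ℂ) ^ (n + 1) / ((n + 1).factorial : ℂ) *
            ∑ c : ClosedPath G (n + 1), pathWeight G P c) := by
  have he := orthogonalIdempotents_of_support (fun p : GFlag G => p.1.1) hidem hloc hloc'
  replace hM : M = ∑ v, ∑ w, P v * adjTransfer G v w * P w := by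
    simp only [hM, dite_Amap_eq_mul_adjTransfer_mul]
  have hrange : ∀ x, M x ∈ 𝒢 := fun x => by
    rw [h𝒢, hM, ← he.sum_mul_sum_corner]
    exact LinearMap.mem_range_self _ _
  have htrace : ∀ n, LinearMap.trace ℂ 𝒢 ((M.restrict hMG) ^ (n + 1)) =
      ∑ c : ClosedPath G (n + 1), pathWeight G P c := fun n => by
    have hpow : ∀ x, (M ^ (n + 1)) x ∈ 𝒢 := fun x =>
      Module.End.pow_apply_mem_of_forall_mem n hMG _ (hrange x)
    rw [Module.End.pow_restrict, LinearMap.trace_restrict_eq_of_forall_mem _ _ hpow, hM,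
      LinearMap.trace_pow_sum_corner he, sum_pathWeight_eq_sum_trace]
  rw [LinearMap.tsum_trace_one_sub_pow,
    (LinearMap.hasSum_trace_exp_smul_toMatrix (Module.finBasis ℂ 𝒢) _ _).summable.tsum_eq_zero_add]
  simp only [pow_zero, Nat.factorial_zero, Nat.cast_one, div_one, one_mul, LinearMap.trace_one,
    htrace]

/-- Trace formula ("discrete path integral") for the generalised discrete Laplacian
`Δ̂_𝒢 = Id − M_𝒢` of a vertex space `𝒢 = ⊕_v 𝒢_v` (given by local orthogonal projections
`P_v`) on a finite simple graph with `ℓ_e = 1`: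
`tr e^{−tΔ̂_𝒢} = e^{−t} Σ_{n≥0} tⁿ/n! Σ_{c ∈ C_n} W_𝒢(c)` (the `n = 0` term being
`Σ_v dim 𝒢_v = dim 𝒢`). -/
theorem stmt15 {V : Type*} [Fintype V] [DecidableEq V] (G : SimpleGraph V)
    [DecidableRel G.Adj]
    (P : V → Module.End ℂ (GFlag G → ℂ))
    (hidem : ∀ v, P v ∘ₗ P v = P v)
    (hsa : ∀ v (F F' : GFlag G → ℂ),
      ∑ p : GFlag G, P v F p * conj' (F' p) = ∑ p : GFlag G, F p * conj' (P v F' p))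
    (hloc : ∀ v (F : GFlag G → ℂ) (p : GFlag G), p.1.1 ≠ v → P v F p = 0)
    (hloc' : ∀ v (F : GFlag G → ℂ), (∀ p : GFlag G, p.1.1 = v → F p = 0) → P v F = 0)
    (M : Module.End ℂ (GFlag G → ℂ))
    (hM : M = ∑ v : V, ∑ w : V,
      if h : G.Adj v w then Amap G P h else 0)
    (𝒢 : Submodule ℂ (GFlag G → ℂ)) (h𝒢 : 𝒢 = LinearMap.range (∑ v : V, P v))
    (hMG : ∀ x ∈ 𝒢, M x ∈ 𝒢)
    (t : ℝ) (ht : 0 < t) :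
    ∑' n : ℕ, (-(t : ℂ)) ^ n / (n.factorial : ℂ) *
        LinearMap.trace ℂ 𝒢 ((1 - M.restrict hMG) ^ n)
      = Complex.exp (-(t : ℂ)) * ((Module.finrank ℂ 𝒢 : ℂ) +
          ∑' n : ℕ, (t : ℂ) ^ (n + 1) / ((n + 1).factorial : ℂ) *
            ∑ c : ClosedPath G (n + 1), pathWeight G P c) :=
  stmt15_general G P hidem hloc hloc' M hM 𝒢 h𝒢 hMG t
end

section
/- For a finite simple r-regular graph G with standard vertex space, the heat trace satisfies tr e^{−tΔ̂^std} = e^{−t} Σ_{n=0}^∞ (tⁿ / (rⁿ n!)) |C_n|, where |C_n| is the number of properly closed paths of combinatorial length n; in particular |C₀| = |V|, |C₁| = 0, and |C₂| = 2|E|. -/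
open Finset

/-- The transition (averaging) operator `M = (1/r)·A` of an `r`-regular simple graph. -/
noncomputable def Mstd {V : Type*} [Fintype V] [DecidableEq V] (G : SimpleGraph V)
    [DecidableRel G.Adj] (r : ℕ) : Module.End ℂ (V → ℂ) where
  toFun F := fun v => (r : ℂ)⁻¹ * ∑ w ∈ G.neighborFinset v, F w
  map_add' F F' := by
    funext v
    simp [Finset.sum_add_distrib, mul_add]
  map_smul' c F := by
    funext v
    simp [Finset.mul_sum]
    exact Finset.sum_congr rfl fun x _ => by ring

/-! Since `Δ̂ = 1 - M` and `1` commutes with `M`, the binomial theorem turns the heat trace into the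
Cauchy product of `e^{-t} = Σ (-t)ᵐ/m!` with `Σ tᵏ/k! · tr Mᵏ`. Writing `M = r⁻¹ A`, expanding
`Aᵏ` as a sum over vertex tuples shows that `tr Aᵏ` counts the closed paths of length `k`, and
regularity bounds every entry of `Aᵏ` by `rᵏ`, so `‖tr Mᵏ‖ ≤ |V|` and all series converge
absolutely. -/

open scoped Nat

theorem LinearMap.trace_one_sub_pow {R M : Type*} [CommRing R] [AddCommGroup M] [Module R M]
    (f : Module.End R M) (n : ℕ) :
    LinearMap.trace R M ((1 - f) ^ n)
      = ∑ k ∈ Finset.range (n + 1), (n.choose k : R) * (-1) ^ k * LinearMap.trace R M (f ^ k) := by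
  rw [sub_eq_neg_add, (Commute.one_right (-f)).add_pow, map_sum]
  refine sum_congr rfl fun k _ ↦ ?_
  rw [one_pow, mul_one, ← neg_one_smul R f, smul_pow, ← Nat.cast_comm, ← nsmul_eq_mul, map_nsmul,
    map_smul, nsmul_eq_mul, smul_eq_mul, mul_assoc]

theorem summable_norm_pow_div_factorial_mul {a : ℕ → ℂ} {C : ℝ} (ha : ∀ k, ‖a k‖ ≤ C) (z : ℂ) :
    Summable fun k ↦ ‖z ^ k / k ! * a k‖ := by
  refine .of_nonneg_of_le (fun _ ↦ norm_nonneg _) (fun k ↦ ?_)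
    ((Real.summable_pow_div_factorial ‖z‖).mul_right C)
  rw [norm_mul, norm_div, norm_pow, Complex.norm_natCast]
  gcongr
  exact ha k

theorem tsum_pow_div_factorial_mul_sum_choose {a : ℕ → ℂ} {C : ℝ} (ha : ∀ k, ‖a k‖ ≤ C) (z : ℂ) :
    ∑' n, z ^ n / n ! * ∑ k ∈ range (n + 1), (n.choose k : ℂ) * (-1) ^ k * a k
      = Complex.exp z * ∑' k, (-z) ^ k / k ! * a k := by
  have hexp : Complex.exp z = ∑' m, z ^ m / m ! := by
    rw [Complex.exp_eq_exp_ℂ, NormedSpace.exp_eq_tsum_div]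
  have hz : Summable fun m ↦ ‖z ^ m / (m ! : ℂ)‖ := by
    simpa using summable_norm_pow_div_factorial_mul (a := 1) (C := 1) (by simp) z
  rw [hexp, mul_comm, tsum_mul_tsum_eq_tsum_sum_range_of_summable_norm
    (summable_norm_pow_div_factorial_mul ha (-z)) hz]
  refine tsum_congr fun n ↦ ?_
  rw [mul_sum]
  refine sum_congr rfl fun k hk ↦ ?_
  have hkn : k ≤ n := Nat.lt_succ_iff.mp (mem_range.mp hk)
  have hchoose : (n.choose k : ℂ) * k ! * (n - k)! = n ! := by
    exact_mod_cast Nat.choose_mul_factorial_mul_factorial hkn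
  have hpow : z ^ n = z ^ k * z ^ (n - k) := by rw [← pow_add, Nat.add_sub_cancel' hkn]
  have hchoose_ne : (n.choose k : ℂ) ≠ 0 := by exact_mod_cast (Nat.choose_pos hkn).ne'
  rw [hpow, neg_pow z, ← hchoose]
  field_simp

namespace Matrix

variable {ι R : Type*} [Fintype ι] [DecidableEq ι] [CommSemiring R]

theorem pow_succ_apply_eq_sum_prod (B : Matrix ι ι R) (n : ℕ) (u v : ι) :
    (B ^ (n + 1)) u v = ∑ c : Fin n → ι, ∏ i : Fin (n + 1),
      B ((Fin.cons u (Fin.snoc c v) : Fin (n + 2) → ι) i.castSucc)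
        ((Fin.cons u (Fin.snoc c v) : Fin (n + 2) → ι) i.succ) := by
  induction n generalizing u with
  | zero => simp [Fin.snoc]
  | succ n ih =>
    rw [pow_succ', mul_apply, ← (Fin.consEquiv fun _ ↦ ι).sum_comp, Fintype.sum_prod_type]
    refine sum_congr rfl fun w _ ↦ ?_
    rw [ih, mul_sum]
    refine sum_congr rfl fun c _ ↦ ?_
    dsimp only [Fin.consEquiv, Equiv.coe_fn_mk]
    rw [← Fin.cons_snoc_eq_snoc_cons]
    conv_rhs => rw [Fin.prod_univ_succ]
    simp only [← Fin.succ_castSucc, Fin.cons_succ, Fin.cons_zero, Fin.castSucc_zero]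

theorem trace_pow_succ_eq_sum_prod (B : Matrix ι ι R) (n : ℕ) :
    (B ^ (n + 1)).trace = ∑ c : Fin (n + 1) → ι, ∏ i, B (c i) (c (finRotate (n + 1) i)) := by
  rw [← (Fin.consEquiv fun _ ↦ ι).sum_comp, Fintype.sum_prod_type, trace]
  refine sum_congr rfl fun u _ ↦ ?_
  rw [diag_apply, pow_succ_apply_eq_sum_prod]
  refine sum_congr rfl fun c _ ↦ prod_congr rfl fun i _ ↦ ?_
  dsimp only [Fin.consEquiv, Equiv.coe_fn_mk]
  congr 1
  · cases i using Fin.cases with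
    | zero => simp
    | succ j => rw [← Fin.succ_castSucc, Fin.cons_succ, Fin.snoc_castSucc, Fin.cons_succ]
  · cases i using Fin.lastCases with
    | last =>
      rw [Fin.succ_last, ← Fin.succ_last, Fin.cons_succ, Fin.snoc_last, finRotate_last,
        Fin.cons_zero]
    | cast j => rw [Fin.cons_succ, Fin.snoc_castSucc, finRotate_apply, Fin.coeSucc_eq_succ,
        Fin.cons_succ]

end Matrix

namespace SimpleGraph

variable {V : Type*} [Fintype V] (G : SimpleGraph V) [DecidableRel G.Adj]

theorem card_closedPath_one : Fintype.card (ClosedPath G 1) = 0 :=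
  Fintype.card_eq_zero_iff.2 ⟨fun c ↦ G.irrefl (c.2 0)⟩

variable [DecidableEq V]

theorem card_closedPath_succ (n : ℕ) :
    Fintype.card (ClosedPath G (n + 1)) = (G.adjMatrix ℕ ^ (n + 1)).trace := by
  rw [Matrix.trace_pow_succ_eq_sum_prod, Fintype.card_subtype, card_filter]
  refine sum_congr rfl fun c _ ↦ ?_
  simp only [adjMatrix_apply, prod_boole]
  simp

theorem card_closedPath_two : Fintype.card (ClosedPath G 2) = 2 * #G.edgeFinset := by
  rw [card_closedPath_succ, ← sum_degrees_eq_twice_card_edges, Matrix.trace, pow_two]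
  exact sum_congr rfl fun u _ ↦ by simpa using G.adjMatrix_mul_self_apply_self (α := ℕ) u

theorem Mstd_eq_smul_toLin' (r : ℕ) : Mstd G r = (r : ℂ)⁻¹ • (G.adjMatrix ℂ).toLin' := by
  ext F v
  simp [Mstd, Matrix.toLin'_apply]

theorem trace_Mstd_pow (r n : ℕ) :
    LinearMap.trace ℂ (V → ℂ) (Mstd G r ^ n) = (r : ℂ)⁻¹ ^ n * ((G.adjMatrix ℕ ^ n).trace : ℂ) := by
  rw [Mstd_eq_smul_toLin', smul_pow, map_smul, ← Matrix.toLin'_pow, Matrix.trace_toLin'_eq,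
    smul_eq_mul]
  congr 1
  rw [← eq_natCast (Nat.castRingHom ℂ), AddMonoidHom.map_trace (Nat.castRingHom ℂ), Matrix.map_pow]
  congr
  ext v w
  by_cases h : G.Adj v w <;> simp [h]

variable {G} {r : ℕ}

theorem IsRegularOfDegree.adjMatrix_pow_apply_le (hreg : G.IsRegularOfDegree r) (n : ℕ)
    (u v : V) : (G.adjMatrix ℕ ^ n) u v ≤ r ^ n := by
  induction n generalizing u with
  | zero => by_cases h : u = v <;> simp [h]
  | succ n ih =>
    calc (G.adjMatrix ℕ ^ (n + 1)) u v = ∑ w ∈ G.neighborFinset u, (G.adjMatrix ℕ ^ n) w v := by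
          rw [pow_succ', adjMatrix_mul_apply]
      _ ≤ ∑ _w ∈ G.neighborFinset u, r ^ n := sum_le_sum fun w _ ↦ ih w
      _ = r ^ (n + 1) := by
          rw [sum_const, card_neighborFinset_eq_degree, hreg u, smul_eq_mul, pow_succ']

theorem IsRegularOfDegree.trace_adjMatrix_pow_le (hreg : G.IsRegularOfDegree r) (n : ℕ) :
    (G.adjMatrix ℕ ^ n).trace ≤ Fintype.card V * r ^ n := by
  simpa [Matrix.trace] using sum_le_sum fun u (_ : u ∈ univ) ↦ hreg.adjMatrix_pow_apply_le n u u

theorem IsRegularOfDegree.norm_trace_Mstd_pow_le (hreg : G.IsRegularOfDegree r) (n : ℕ) :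
    ‖LinearMap.trace ℂ (V → ℂ) (Mstd G r ^ n)‖ ≤ Fintype.card V := by
  have htrace : ((G.adjMatrix ℕ ^ n).trace : ℝ) ≤ Fintype.card V * r ^ n := by
    exact_mod_cast hreg.trace_adjMatrix_pow_le n
  rw [trace_Mstd_pow, norm_mul, norm_pow, norm_inv, Complex.norm_natCast, Complex.norm_natCast]
  calc (r : ℝ)⁻¹ ^ n * (G.adjMatrix ℕ ^ n).trace ≤ (r : ℝ)⁻¹ ^ n * (Fintype.card V * r ^ n) := by
        gcongr
    _ = Fintype.card V * ((r : ℝ)⁻¹ * r) ^ n := by ring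
    _ ≤ Fintype.card V := by
        apply mul_le_of_le_one_right (Nat.cast_nonneg _)
        exact pow_le_one₀ (by positivity) (inv_mul_le_one_of_le₀ le_rfl (Nat.cast_nonneg _))

end SimpleGraph

theorem stmt16_general {V : Type*} [Fintype V] [DecidableEq V] (G : SimpleGraph V)
    [DecidableRel G.Adj] (r : ℕ) (hreg : G.IsRegularOfDegree r)
    (t : ℝ) :
    (∑' n : ℕ, (-(t : ℂ)) ^ n / (n.factorial : ℂ) *
        LinearMap.trace ℂ (V → ℂ) ((1 - Mstd G r) ^ n)
      = Complex.exp (-(t : ℂ)) * ((Fintype.card V : ℂ) +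
          ∑' n : ℕ, (t : ℂ) ^ (n + 1) / ((r : ℂ) ^ (n + 1) * ((n + 1).factorial : ℂ)) *
            (Fintype.card (ClosedPath G (n + 1)) : ℂ))) ∧
    Fintype.card (ClosedPath G 1) = 0 ∧
    Fintype.card (ClosedPath G 2) = 2 * G.edgeFinset.card := by
  refine ⟨?_, G.card_closedPath_one, G.card_closedPath_two⟩
  have hbound := hreg.norm_trace_Mstd_pow_le
  simp_rw [LinearMap.trace_one_sub_pow]
  rw [tsum_pow_div_factorial_mul_sum_choose hbound, neg_neg,
    (summable_norm_pow_div_factorial_mul hbound _).of_norm.tsum_eq_zero_add]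
  congr 2
  · simp
  · refine tsum_congr fun n ↦ ?_
    rw [G.trace_Mstd_pow, ← G.card_closedPath_succ]
    ring

/-- Heat trace formula for the standard discrete Laplacian `Δ̂ = Id − M` of a finite simple
`r`-regular graph: `tr e^{−tΔ̂} = e^{−t} Σ_{n≥0} tⁿ/(rⁿ n!)·|C_n|` (the `n = 0` term being
`|C₀| = |V|`); in particular `|C₁| = 0` and `|C₂| = 2|E|`. -/
theorem stmt16 {V : Type*} [Fintype V] [DecidableEq V] (G : SimpleGraph V)
    [DecidableRel G.Adj] (r : ℕ) (hreg : G.IsRegularOfDegree r) (hr : 0 < r)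
    (t : ℝ) (ht : 0 < t) :
    (∑' n : ℕ, (-(t : ℂ)) ^ n / (n.factorial : ℂ) *
        LinearMap.trace ℂ (V → ℂ) ((1 - Mstd G r) ^ n)
      = Complex.exp (-(t : ℂ)) * ((Fintype.card V : ℂ) +
          ∑' n : ℕ, (t : ℂ) ^ (n + 1) / ((r : ℂ) ^ (n + 1) * ((n + 1).factorial : ℂ)) *
            (Fintype.card (ClosedPath G (n + 1)) : ℂ))) ∧
    Fintype.card (ClosedPath G 1) = 0 ∧
    Fintype.card (ClosedPath G 2) = 2 * G.edgeFinset.card :=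
  stmt16_general G r hreg t
end
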